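/- arXiv:2206.11179 — 6 statements merged into one kernel-verified Lean document; each statement's English description precedes it below -/
import Mathlib

section
/- Let U be a nonempty totally disconnected compact Hausdorff space and σ : U → U a homeomorphism with σ ∘ σ = id. If σ has no fixed points, then there exists a clopen subset V ⊆ U such that U is the disjoint union of V and σ(V). -/
/-!
Call a set `W` free if it is disjoint from its preimage `σ ⁻¹' W`; for an involution this
preimage is `σ '' W`. Every point `x` has a free clopen neighbourhood: separate `x` from
`σ x ≠ x` by a clopen `C` and take `C ∩ σ ⁻¹' Cᶜ`. By compactness finitely many of these
cover the space, and they are merged greedily: a free clopen `V` absorbs a free clopen `W` as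
`V ∪ (W \ (V ∪ σ ⁻¹' V))`, which is again free and whose orbit-saturation contains `W`.
-/

open Set

section

variable {X : Type*} {f : X → X}

theorem Function.Involutive.disjoint_preimage_union_diff (hf : f.Involutive) {V W : Set X}
    (hV : Disjoint V (f ⁻¹' V)) (hW : Disjoint W (f ⁻¹' W)) :
    Disjoint (V ∪ W \ (V ∪ f ⁻¹' V)) (f ⁻¹' (V ∪ W \ (V ∪ f ⁻¹' V))) := by
  rw [disjoint_left]
  rintro a (haV | ⟨haW, haV⟩) (hfa | ⟨hfaW, hfaV⟩)
  · exact disjoint_left.mp hV haV hfa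
  · exact hfaV (Or.inr (by rwa [mem_preimage, hf a]))
  · exact haV (Or.inr hfa)
  · exact disjoint_left.mp hW haW hfaW

theorem exists_isClopen_mem_disjoint_preimage [TopologicalSpace X] [TotallySeparatedSpace X]
    (hc : Continuous f) {x : X} (hx : f x ≠ x) :
    ∃ W : Set X, IsClopen W ∧ x ∈ W ∧ Disjoint W (f ⁻¹' W) := by
  obtain ⟨C, hC, hxC, hfxC⟩ := exists_isClopen_of_totally_separated hx.symm
  refine ⟨C ∩ f ⁻¹' Cᶜ, hC.inter (hC.compl.preimage hc), ⟨hxC, hfxC⟩, ?_⟩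
  rw [disjoint_left]
  rintro a ⟨-, hfaC⟩ ⟨hfa, -⟩
  exact hfaC hfa

theorem Function.Involutive.exists_isClopen_disjoint_preimage_biUnion_subset
    [TopologicalSpace X] (hf : f.Involutive) (hc : Continuous f) {ι : Type*} (s : Finset ι)
    (W : ι → Set X) (hW : ∀ i ∈ s, IsClopen (W i) ∧ Disjoint (W i) (f ⁻¹' W i)) :
    ∃ V : Set X, IsClopen V ∧ Disjoint V (f ⁻¹' V) ∧ ⋃ i ∈ s, W i ⊆ V ∪ f ⁻¹' V := by
  classical
  induction s using Finset.induction_on with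
  | empty => exact ⟨∅, isClopen_empty, by simp, by simp⟩
  | insert j s _ ih =>
    obtain ⟨V, hVc, hVd, hVs⟩ := ih fun i hi => hW i (Finset.mem_insert_of_mem hi)
    obtain ⟨hWc, hWd⟩ := hW j (Finset.mem_insert_self j s)
    have hsat : V ∪ f ⁻¹' V ⊆ (V ∪ W j \ (V ∪ f ⁻¹' V)) ∪ f ⁻¹' (V ∪ W j \ (V ∪ f ⁻¹' V)) :=
      union_subset_union subset_union_left (preimage_mono subset_union_left)
    refine ⟨V ∪ W j \ (V ∪ f ⁻¹' V), hVc.union (hWc.diff (hVc.union (hVc.preimage hc))),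
      hf.disjoint_preimage_union_diff hVd hWd, ?_⟩
    rw [Finset.set_biUnion_insert]
    refine union_subset (fun a ha => ?_) (hVs.trans hsat)
    by_cases haV : a ∈ V ∪ f ⁻¹' V
    · exact hsat haV
    · exact Or.inl (Or.inr ⟨ha, haV⟩)

end

theorem stmt_0_general {U : Type*} [TopologicalSpace U] [CompactSpace U] [T2Space U]
    [TotallyDisconnectedSpace U] (σ : U ≃ₜ U)
    (hinv : ∀ x, σ (σ x) = x) (hfix : ∀ x, σ x ≠ x) :
    ∃ V : Set U, IsClopen V ∧ Disjoint V (⇑σ '' V) ∧ V ∪ ⇑σ '' V = Set.univ := by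
  have hσ : Function.Involutive σ := hinv
  choose W hWc hWx hWd using fun x => exists_isClopen_mem_disjoint_preimage σ.continuous (hfix x)
  obtain ⟨t, ht⟩ := isCompact_univ.elim_finite_subcover W (fun x => (hWc x).isOpen)
    fun x _ => mem_iUnion.mpr ⟨x, hWx x⟩
  obtain ⟨V, hVc, hVd, hVt⟩ :=
    hσ.exists_isClopen_disjoint_preimage_biUnion_subset σ.continuous t W fun x _ => ⟨hWc x, hWd x⟩
  rw [hσ.image_eq_preimage_symm]
  exact ⟨V, hVc, hVd, univ_subset_iff.mp (ht.trans hVt)⟩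

theorem stmt_0 {U : Type*} [TopologicalSpace U] [CompactSpace U] [T2Space U]
    [TotallyDisconnectedSpace U] [Nonempty U] (σ : U ≃ₜ U)
    (hinv : ∀ x, σ (σ x) = x) (hfix : ∀ x, σ x ≠ x) :
    ∃ V : Set U, IsClopen V ∧ Disjoint V (⇑σ '' V) ∧ V ∪ ⇑σ '' V = Set.univ :=
  stmt_0_general σ hinv hfix
end

section
/- Let a, b be homeomorphisms of a compact space X with a² = b² = id, such that the composition b ∘ a is minimal and a has a fixed point. If h : X → ℤ is continuous and satisfies h ∘ a = -h and h ∘ b = -h, then h = 0. -/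
namespace Equiv.Perm

theorem apply_zpow_apply_of_invariant {X Y : Type*} {f : X → Y} {σ : Perm X}
    (hf : ∀ x, f (σ x) = f x) (n : ℤ) (x : X) : f ((σ ^ n) x) = f x := by
  induction n using Int.induction_on generalizing x with
  | zero => rfl
  | succ k ih => rw [zpow_add_one, mul_apply, ih, hf]
  | pred k ih => rw [zpow_sub_one, mul_apply, ih, ← hf, ← mul_apply, mul_inv_cancel, one_apply]

end Equiv.Perm

theorem Continuous.apply_eq_of_dense_zpow_orbit {X Y : Type*} [TopologicalSpace X]
    [TopologicalSpace Y] [T2Space Y] {f : X → Y} (hf : Continuous f) {σ : Equiv.Perm X}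
    (hσ : ∀ x, f (σ x) = f x) {x₀ : X} (hx₀ : Dense {y | ∃ n : ℤ, (σ ^ n) x₀ = y}) (x : X) :
    f x = f x₀ :=
  congrFun (hf.ext_on hx₀ continuous_const fun _ ⟨n, hn⟩ ↦
    hn ▸ Equiv.Perm.apply_zpow_apply_of_invariant hσ n x₀) x

theorem stmt_8_general {X : Type*} [TopologicalSpace X]
    (a b : X ≃ₜ X)
    (hmin : ∀ x : X, Dense {y : X | ∃ n : ℤ, ((a.toEquiv.trans b.toEquiv) ^ n) x = y})
    (hfix : ∃ x, a x = x)
    (h : X → ℤ) (hc : Continuous h)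
    (hha : ∀ x, h (a x) = -h x) (hhb : ∀ x, h (b x) = -h x) :
    ∀ x, h x = 0 := by
  obtain ⟨x₀, hx₀⟩ := hfix
  have h_x₀ : h x₀ = 0 := by have := hha x₀; rw [hx₀] at this; omega
  have h_invariant : ∀ x, h ((a.toEquiv.trans b.toEquiv) x) = h x := fun x ↦ by
    simp only [Equiv.trans_apply, Homeomorph.coe_toEquiv, hhb, hha, neg_neg]
  intro x
  rw [hc.apply_eq_of_dense_zpow_orbit h_invariant (hmin x₀) x, h_x₀]

theorem stmt_8 {X : Type*} [TopologicalSpace X] [CompactSpace X] [Nonempty X]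
    (a b : X ≃ₜ X) (ha : ∀ x, a (a x) = x) (hb : ∀ x, b (b x) = x)
    (hmin : ∀ x : X, Dense {y : X | ∃ n : ℤ, ((a.toEquiv.trans b.toEquiv) ^ n) x = y})
    (hfix : ∃ x, a x = x)
    (h : X → ℤ) (hc : Continuous h)
    (hha : ∀ x, h (a x) = -h x) (hhb : ∀ x, h (b x) = -h x) :
    ∀ x, h x = 0 :=
  stmt_8_general a b hmin hfix h hc hha hhb
end

section
/- Let σ be an involutive homeomorphism of a compact totally disconnected Hausdorff space X, and let U' be a clopen subset of the fixed-point set Fix_σ (in the subspace topology). Then there exists a clopen set U ⊆ X with σ(U) = U and U ∩ Fix_σ = U'. -/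
theorem stmt_9 {X : Type*} [TopologicalSpace X] [CompactSpace X] [T2Space X]
    [TotallyDisconnectedSpace X] (σ : X ≃ₜ X) (hσ : ∀ x, σ (σ x) = x)
    (U' : Set X) (hsub : U' ⊆ {x | σ x = x})
    (hclopen : IsClopen ((Subtype.val ⁻¹' U' : Set {x : X // σ x = x}))) :
    ∃ U : Set X, IsClopen U ∧ ⇑σ '' U = U ∧ U ∩ {x | σ x = x} = U' := by
  set F : Set X := {x | σ x = x} with hF
  have hFclosed : IsClosed F := isClosed_eq σ.continuous continuous_id
  -- U' is closed in X, hence compact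
  have hU'closed : IsClosed U' := by
    have h := (hFclosed.isClosedEmbedding_subtypeVal.isClosedMap _ hclopen.isClosed)
    have himg : Subtype.val '' (Subtype.val ⁻¹' U' : Set F) = U' := by
      ext x
      simp only [Set.mem_image, Set.mem_preimage, Subtype.exists, exists_and_right,
        exists_eq_right]
      exact ⟨fun ⟨_, hx⟩ => hx, fun hx => ⟨hsub hx, hx⟩⟩
    rw [← himg]; exact h
  have hU'comp : IsCompact U' := hU'closed.isCompact
  -- U' is the trace of an open set O
  obtain ⟨O, hO, hOF⟩ := isOpen_induced_iff.mp hclopen.isOpen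
  have hOU : O ∩ F = U' := by
    ext x
    constructor
    · rintro ⟨hxO, hxF⟩
      have : (⟨x, hxF⟩ : {x : X // σ x = x}) ∈ Subtype.val ⁻¹' U' := by
        rw [← hOF]; exact hxO
      exact this
    · intro hx
      have hxF : x ∈ F := hsub hx
      have : (⟨x, hxF⟩ : {x : X // σ x = x}) ∈ Subtype.val ⁻¹' O := by
        rw [hOF]; exact hx
      exact ⟨this, hxF⟩
  -- clopen neighborhoods inside O
  have key : ∀ x ∈ U', ∃ V : Set X, IsClopen V ∧ x ∈ V ∧ V ⊆ O := by
    intro x hx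
    have hxO : x ∈ O := (hOU ▸ hx : x ∈ O ∩ F).1
    obtain ⟨V, hV, hxV, hVO⟩ := compact_exists_isClopen_in_isOpen hO hxO
    exact ⟨V, hV, hxV, hVO⟩
  choose V hVclopen hVmem hVsub using key
  obtain ⟨t, ht⟩ := hU'comp.elim_nhds_subcover' (fun x hx => V x hx)
    (fun x hx => (hVclopen x hx).isOpen.mem_nhds (hVmem x hx))
  set W : Set X := ⋃ x ∈ t, V x.1 x.2 with hW
  have hWclopen : IsClopen W := by
    apply Set.Finite.isClopen_biUnion t.finite_toSet
    exact fun x _ => hVclopen x.1 x.2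
  have hWO : W ⊆ O := Set.iUnion₂_subset fun x _ => hVsub x.1 x.2
  have hWF : W ∩ F = U' := by
    apply subset_antisymm
    · intro x hx
      rw [← hOU]
      exact ⟨hWO hx.1, hx.2⟩
    · intro x hx
      exact ⟨ht hx, hsub hx⟩
  refine ⟨W ∩ σ ⁻¹' W, hWclopen.inter (hWclopen.preimage σ.continuous), ?_, ?_⟩
  · have hsymm : ∀ x, σ.symm x = σ x := fun x =>
      σ.injective (by rw [σ.apply_symm_apply, hσ])
    have himg : ∀ s : Set X, σ '' s = σ ⁻¹' s := by
      intro s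
      ext x
      simp only [Set.mem_image, Set.mem_preimage]
      constructor
      · rintro ⟨y, hy, rfl⟩; rwa [hσ]
      · intro h; exact ⟨σ x, h, hσ x⟩
    rw [himg, Set.preimage_inter]
    have : σ ⁻¹' (σ ⁻¹' W) = W := by ext x; simp [hσ]
    rw [this, Set.inter_comm]
  · ext x
    simp only [Set.mem_inter_iff, Set.mem_preimage, Set.mem_setOf_eq]
    constructor
    · rintro ⟨⟨hxW, _⟩, hxF⟩
      rw [← hWF]; exact ⟨hxW, hxF⟩
    · intro hx
      have hxF : σ x = x := hsub hx
      exact ⟨⟨ht hx, by rw [hxF]; exact ht hx⟩, hxF⟩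
end

section
/- Let n ∈ ℤ and let σ, φ be homeomorphisms of a compact totally disconnected Hausdorff space X with σ² = id and σφσ = φ⁻¹. Let U ⊆ X be a clopen set with φⁿσ(U) = U and U ∩ Fix_{φⁿσ} = ∅. Then there exists a clopen V ⊆ U with U = V ⊔ φⁿσ(V), and the homeomorphism (φⁿσ)_U (equal to φⁿσ on U and the identity elsewhere) equals τ_{φⁿσ, V}, i.e., it is the transposition swapping V and φⁿσ(V) pointwise via φⁿσ. -/
open scoped Classical

/-!
Since `σφσ = φ⁻¹` and `σ² = 1`, the map `g = φⁿσ` is a continuous involution. Each point of `U`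
is moved by `g`, so it has a clopen neighbourhood `W ⊆ U` with `W ∩ gW = ∅`. Two such
"half-domains" `V₁, V₂` combine into `V₁ ∪ (V₂ \ (V₁ ∪ gV₁))`, which is again disjoint from its
image and whose orbit is the union of both orbits; by compactness finitely many neighbourhoods
cover `U`, giving a clopen `V` with `U = V ⊔ gV`. On such a `V` the restriction `g_U` is the
transposition `τ_{g,V}`, as `g⁻¹ = g`.
-/

open Set Function

theorem zpow_mul_mul_self_eq_one {G : Type*} [Group G] {s p : G} (hs : s * s = 1)
    (hsp : s * p * s = p⁻¹) (n : ℤ) : p ^ n * s * (p ^ n * s) = 1 := by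
  have hs_inv : s⁻¹ = s := (eq_inv_of_mul_eq_one_left hs).symm
  have hconj : s * p ^ n * s = (p ^ n)⁻¹ :=
    calc s * p ^ n * s = (s * p * s⁻¹) ^ n := by rw [conj_zpow, hs_inv]
      _ = (p ^ n)⁻¹ := by rw [hs_inv, hsp, inv_zpow]
  calc p ^ n * s * (p ^ n * s) = p ^ n * (s * p ^ n * s) := by simp only [mul_assoc]
    _ = 1 := by rw [hconj, mul_inv_cancel]

def Homeomorph.toPermHom (X : Type*) [TopologicalSpace X] : (X ≃ₜ X) →* Equiv.Perm X where
  toFun := Homeomorph.toEquiv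
  map_one' := rfl
  map_mul' _ _ := rfl

theorem Homeomorph.toEquiv_zpow {X : Type*} [TopologicalSpace X] (φ : X ≃ₜ X) (n : ℤ) :
    (φ ^ n).toEquiv = φ.toEquiv ^ n :=
  map_zpow (Homeomorph.toPermHom X) φ n

namespace Function.Involutive

variable {X : Type*} {g : X → X}

theorem disjoint_image_union_diff (hg : Involutive g) {V₁ V₂ : Set X}
    (h₁ : Disjoint V₁ (g '' V₁)) (h₂ : Disjoint V₂ (g '' V₂)) :
    Disjoint (V₁ ∪ (V₂ \ (V₁ ∪ g '' V₁))) (g '' (V₁ ∪ (V₂ \ (V₁ ∪ g '' V₁)))) := by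
  rw [hg.image_eq_preimage_symm] at *
  simp only [Set.disjoint_left, mem_union, mem_sdiff, mem_preimage, hg _] at *
  grind

theorem union_image_union_diff (hg : Involutive g) (V₁ V₂ : Set X) :
    V₁ ∪ (V₂ \ (V₁ ∪ g '' V₁)) ∪ g '' (V₁ ∪ (V₂ \ (V₁ ∪ g '' V₁))) =
      V₁ ∪ g '' V₁ ∪ (V₂ ∪ g '' V₂) := by
  rw [hg.image_eq_preimage_symm]
  ext x
  simp only [mem_union, mem_sdiff, mem_preimage, hg _]
  tauto

end Function.Involutive

section FundamentalDomain

variable {X : Type*} [TopologicalSpace X] [CompactSpace X] [T2Space X]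
  [TotallyDisconnectedSpace X] {g : X → X}

theorem exists_isClopen_mem_subset_disjoint_image (hg : Continuous g) {x : X} (hx : g x ≠ x)
    {O : Set X} (hO : IsOpen O) (hxO : x ∈ O) :
    ∃ W : Set X, IsClopen W ∧ x ∈ W ∧ W ⊆ O ∧ Disjoint W (g '' W) := by
  obtain ⟨A, B, hA, hB, hgxA, hxB, hAB⟩ := t2_separation hx
  obtain ⟨W, hW, hxW, hWsub⟩ :=
    compact_exists_isClopen_in_isOpen ((hO.inter hB).inter (hA.preimage hg)) ⟨⟨hxO, hxB⟩, hgxA⟩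
  refine ⟨W, hW, hxW, fun y hy => (hWsub hy).1.1, ?_⟩
  have hWB : W ⊆ B := fun y hy => (hWsub hy).1.2
  have hgWA : g '' W ⊆ A := image_subset_iff.2 fun y hy => (hWsub hy).2
  exact (hAB.mono hgWA hWB).symm

theorem exists_isClopen_fundamental_domain (hg : Continuous g) (hinv : Involutive g)
    {U : Set X} (hU : IsClopen U) (hgU : g '' U ⊆ U) (hfree : ∀ x ∈ U, g x ≠ x) :
    ∃ V : Set X, IsClopen V ∧ V ⊆ U ∧ Disjoint V (g '' V) ∧ U = V ∪ g '' V := by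
  have hcover : ∃ V : Set X, IsClopen V ∧ V ⊆ U ∧ Disjoint V (g '' V) ∧ U ⊆ V ∪ g '' V := by
    refine hU.isClosed.isCompact.induction_on (p := fun S => ∃ V : Set X,
      IsClopen V ∧ V ⊆ U ∧ Disjoint V (g '' V) ∧ S ⊆ V ∪ g '' V) ?_ ?_ ?_ ?_
    · exact ⟨∅, isClopen_empty, empty_subset U, by simp, empty_subset _⟩
    · rintro S T hST ⟨V, hV, hVU, hVdisj, hTV⟩
      exact ⟨V, hV, hVU, hVdisj, hST.trans hTV⟩
    · rintro S T ⟨V₁, hV₁, hV₁U, h₁, hS⟩ ⟨V₂, hV₂, hV₂U, h₂, hT⟩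
      have hgV₁ : IsClopen (g '' V₁) := hinv.image_eq_preimage_symm ▸ hV₁.preimage hg
      refine ⟨V₁ ∪ (V₂ \ (V₁ ∪ g '' V₁)), hV₁.union (hV₂.diff (hV₁.union hgV₁)),
        union_subset hV₁U (sdiff_subset.trans hV₂U), hinv.disjoint_image_union_diff h₁ h₂, ?_⟩
      rw [hinv.union_image_union_diff]
      exact union_subset_union hS hT
    · intro x hx
      obtain ⟨W, hW, hxW, hWU, hWdisj⟩ :=
        exists_isClopen_mem_subset_disjoint_image hg (hfree x hx) hU.isOpen hx
      exact ⟨W, mem_nhdsWithin_of_mem_nhds (hW.isOpen.mem_nhds hxW),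
        W, hW, hWU, hWdisj, subset_union_left⟩
  obtain ⟨V, hV, hVU, hVdisj, hUV⟩ := hcover
  exact ⟨V, hV, hVU, hVdisj,
    hUV.antisymm (union_subset hVU ((image_mono hVU).trans hgU))⟩

end FundamentalDomain

theorem Equiv.ite_mem_eq_ite_ite_of_eq_union_image {X : Type*} (g : X ≃ X) (hg : Involutive g)
    {U V : Set X} (hUV : U = V ∪ ⇑g '' V) (x : X) [Decidable (x ∈ U)] [Decidable (x ∈ V)]
    [Decidable (x ∈ ⇑g '' V)] :
    (if x ∈ U then g x else x) =
      (if x ∈ V then g x else if x ∈ ⇑g '' V then g.symm x else x) := by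
  have hsymm : g.symm x = g x := g.symm_apply_eq.2 (hg x).symm
  subst hUV
  split_ifs <;> simp_all

theorem stmt_13 {X : Type*} [TopologicalSpace X] [CompactSpace X] [T2Space X]
    [TotallyDisconnectedSpace X] (φ σ : X ≃ₜ X)
    (hσ : ∀ x, σ (σ x) = x) (hrel : ∀ x, σ (φ (σ x)) = φ.symm x)
    (n : ℤ) (U : Set X) (hU : IsClopen U)
    (g : X ≃ X) (hg : g = σ.toEquiv.trans (φ.toEquiv ^ n))
    (hgU : ⇑g '' U = U) (hfree : U ∩ {x | g x = x} = ∅) :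
    ∃ V : Set X, IsClopen V ∧ V ⊆ U ∧ Disjoint V (⇑g '' V) ∧
      U = V ∪ ⇑g '' V ∧
      ∀ x, (if x ∈ U then g x else x) =
        (if x ∈ V then g x else if x ∈ ⇑g '' V then g.symm x else x) := by
  have hg_eq : ⇑g = ⇑(φ ^ n * σ) := by rw [hg, ← Homeomorph.toEquiv_zpow]; rfl
  have hsq : φ ^ n * σ * (φ ^ n * σ) = 1 :=
    zpow_mul_mul_self_eq_one (Homeomorph.ext hσ) (Homeomorph.ext hrel) n
  have hinv : Involutive g := fun x => by simpa [hg_eq] using DFunLike.congr_fun hsq x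
  have hfree' : ∀ x ∈ U, g x ≠ x := fun x hx hgx => hfree.subset ⟨hx, hgx⟩
  obtain ⟨V, hV, hVU, hVdisj, hUV⟩ := exists_isClopen_fundamental_domain
    (hg_eq ▸ (φ ^ n * σ).continuous) hinv hU hgU.subset hfree'
  exact ⟨V, hV, hVU, hVdisj, hUV, fun x => g.ite_mem_eq_ite_ite_of_eq_union_image hinv hUV x⟩
end

section
/- Let (φ, σ) be a minimal action of the infinite dihedral group on the Cantor set X (σ² = id, σφσ = φ⁻¹, every orbit under the group generated by φ and σ is dense). If the action is not free, then φ is minimal as a homeomorphism of X. -/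
/-!
If some `φⁿσ` fixes a point `p`, then `σ p = φ⁻ⁿ p`, so the `φ`-orbit of `p` is its whole
dihedral orbit and is therefore dense. For an arbitrary `x`, `p` lies in the closure of the
`φ`-orbit of `x` or of `σ x`; that closure is closed and `φ`-invariant, hence contains the dense
`φ`-orbit of `p`, and `σ` carries the `φ`-orbit of `σ x` onto that of `x`.
The other kind of fixed point, `φⁿ p = p` with `n ≠ 0`, cannot occur: both `φ`-orbits making up
the dihedral orbit of `p` would be finite, and a finite set is never dense in a perfect space.
-/

open Set Function

namespace Equiv.Perm

variable {α : Type*}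

def zpowOrbit (e : Perm α) (x : α) : Set α := range fun n : ℤ => (e ^ n) x

theorem mapsTo_zpow_zpowOrbit (e : Perm α) (x : α) (n : ℤ) :
    MapsTo (e ^ n) (e.zpowOrbit x) (e.zpowOrbit x) := by
  rintro _ ⟨k, rfl⟩
  exact ⟨n + k, by dsimp only; rw [zpow_add, mul_apply]⟩

theorem zpowOrbit_zpow_apply (e : Perm α) (x : α) (k : ℤ) :
    e.zpowOrbit ((e ^ k) x) = e.zpowOrbit x := by
  ext y
  constructor
  · rintro ⟨n, rfl⟩
    exact ⟨n + k, by dsimp only; rw [zpow_add, mul_apply]⟩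
  · rintro ⟨n, rfl⟩
    exact ⟨n - k, by dsimp only; rw [← mul_apply, ← zpow_add, sub_add_cancel]⟩

theorem setOf_exists_zpow_apply_ite_eq (e : Perm α) (a b : α) :
    {y | ∃ (n : ℤ) (i : Bool), (e ^ n) (if i then a else b) = y} =
      e.zpowOrbit b ∪ e.zpowOrbit a := by
  ext y
  simp only [mem_ofPred_eq, mem_union, zpowOrbit, mem_range, Bool.exists_bool, Bool.false_eq_true,
    if_true, if_false, exists_or]

theorem zpowOrbit_finite_of_zpow_apply_eq_self {e : Perm α} {x : α} {n : ℤ} (hn : n ≠ 0)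
    (hx : (e ^ n) x = x) : (e.zpowOrbit x).Finite := by
  have hper : Periodic (fun k : ℤ => (e ^ k) x) n := fun k => by
    dsimp only
    rw [zpow_add, mul_apply, hx]
  obtain ⟨c, hc, hperc⟩ : ∃ c > 0, Periodic (fun k : ℤ => (e ^ k) x) c :=
    hn.lt_or_gt.elim (fun h => ⟨-n, by omega, hper.neg⟩) (fun h => ⟨n, h, hper⟩)
  refine ((finite_Ico 0 c).image fun k : ℤ => (e ^ k) x).subset ?_
  rintro _ ⟨k, rfl⟩
  obtain ⟨j, hj, hjk⟩ := hperc.exists_mem_Ico₀ hc k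
  exact ⟨j, hj, hjk.symm⟩

theorem apply_zpow_apply_of_dihedral {e s : Perm α} (hs : ∀ x, s (s x) = x)
    (hes : ∀ x, s (e (s x)) = e⁻¹ x) (n : ℤ) (x : α) : s ((e ^ n) x) = (e ^ (-n)) (s x) := by
  have hs_inv : s⁻¹ = s := inv_eq_of_mul_eq_one_right (Perm.ext hs)
  have hconj : s * e * s⁻¹ = e⁻¹ := by
    rw [hs_inv]
    exact Perm.ext hes
  have h := congrArg (· (s x)) (conj_zpow (a := s) (b := e) (i := n))
  rw [hconj, inv_zpow'] at h
  simp only [mul_apply, hs_inv, hs] at h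
  exact h.symm

theorem image_zpowOrbit_of_dihedral {e s : Perm α} (hs : ∀ x, s (s x) = x)
    (hes : ∀ x, s (e (s x)) = e⁻¹ x) (x : α) : s '' e.zpowOrbit x = e.zpowOrbit (s x) := by
  rw [zpowOrbit, ← range_comp]
  simp only [comp_def, apply_zpow_apply_of_dihedral hs hes]
  exact neg_surjective.range_comp fun n : ℤ => (e ^ n) (s x)

end Equiv.Perm

open Equiv.Perm

theorem Set.Finite.not_dense {X : Type*} [TopologicalSpace X] [T1Space X] [PerfectSpace X]
    [Nonempty X] {s : Set X} (hs : s.Finite) : ¬Dense s := fun hd => by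
  rw [← hs.isClosed.closure_eq, hd.closure_eq] at hs
  exact infinite_of_mem_nhds (Classical.arbitrary X) Filter.univ_mem hs

namespace Homeomorph

variable {X : Type*} [TopologicalSpace X]

theorem continuous_toEquiv_zpow (f : X ≃ₜ X) (n : ℤ) : Continuous (f.toEquiv ^ n) := by
  let toPerm : (X ≃ₜ X) →* Equiv.Perm X :=
    { toFun := Homeomorph.toEquiv, map_one' := rfl, map_mul' := fun _ _ => rfl }
  rw [← show toPerm f = f.toEquiv from rfl, ← map_zpow]
  exact (f ^ n).continuous

/-- The closure of a `φ`-orbit is closed and `φ`-invariant, so it contains every orbit it meets. -/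
theorem dense_zpowOrbit_of_mem_closure (f : X ≃ₜ X) {x p : X}
    (hp : Dense (zpowOrbit f.toEquiv p)) (hpx : p ∈ closure (zpowOrbit f.toEquiv x)) :
    Dense (zpowOrbit f.toEquiv x) := by
  refine (hp.mono ?_).of_closure
  rintro _ ⟨n, rfl⟩
  exact ((mapsTo_zpow_zpowOrbit _ x n).closure (f.continuous_toEquiv_zpow n)) hpx

end Homeomorph

section Dihedral

variable {X : Type*} [TopologicalSpace X] {φ σ : X ≃ₜ X}
  (hσ : ∀ x, σ (σ x) = x) (hrel : ∀ x, σ (φ (σ x)) = φ.symm x)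
  (hmin : ∀ x, Dense (zpowOrbit φ.toEquiv x ∪ zpowOrbit φ.toEquiv (σ x)))
include hσ hrel hmin

theorem zpow_apply_ne_self_of_dihedral_minimal [T1Space X] [PerfectSpace X] {n : ℤ} (hn : n ≠ 0)
    (x : X) : (φ.toEquiv ^ n) x ≠ x := by
  intro hx
  have hσx : (φ.toEquiv ^ (-n)) (σ x) = σ x := by
    have h := apply_zpow_apply_of_dihedral (s := σ.toEquiv) hσ hrel n x
    rw [hx] at h
    exact h.symm
  have : Nonempty X := ⟨x⟩
  exact ((zpowOrbit_finite_of_zpow_apply_eq_self hn hx).union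
    (zpowOrbit_finite_of_zpow_apply_eq_self (neg_ne_zero.2 hn) hσx)).not_dense (hmin x)

theorem dense_zpowOrbit_of_dihedral_minimal {n : ℤ} {p : X} (hp : (φ.toEquiv ^ n) (σ p) = p)
    (x : X) : Dense (zpowOrbit φ.toEquiv x) := by
  have hσp : σ p = (φ.toEquiv ^ (-n)) p := by
    rw [zpow_neg, eq_comm, inv_eq_iff_eq, hp]
  have hdense : Dense (zpowOrbit φ.toEquiv p) := by
    simpa only [hσp, zpowOrbit_zpow_apply, union_self] using hmin p
  have hp_mem : p ∈ closure (zpowOrbit φ.toEquiv x) ∪ closure (zpowOrbit φ.toEquiv (σ x)) := by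
    rw [← closure_union]
    exact hmin x p
  rcases hp_mem with hx | hσx
  · exact φ.dense_zpowOrbit_of_mem_closure hdense hx
  · have hσ_image := image_zpowOrbit_of_dihedral (s := σ.toEquiv) hσ hrel (σ x)
    simp only [Homeomorph.coe_toEquiv, hσ] at hσ_image
    rw [← hσ_image]
    exact σ.surjective.denseRange.dense_image σ.continuous
      (φ.dense_zpowOrbit_of_mem_closure hdense hσx)

end Dihedral

theorem stmt_18_general {X : Type*} [TopologicalSpace X] [T2Space X] [PerfectSpace X]
    (φ σ : X ≃ₜ X) (hσ : ∀ x, σ (σ x) = x) (hrel : ∀ x, σ (φ (σ x)) = φ.symm x)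
    (hmin : ∀ x : X,
      Dense {y : X | ∃ (n : ℤ) (i : Bool), (φ.toEquiv ^ n) (if i then σ x else x) = y})
    (hnotfree : ∃ (n : ℤ) (i : Bool) (x : X),
      ¬(n = 0 ∧ i = false) ∧ (φ.toEquiv ^ n) (if i then σ x else x) = x) :
    ∀ x : X, Dense {y : X | ∃ n : ℤ, (φ.toEquiv ^ n) x = y} := by
  simp only [setOf_exists_zpow_apply_ite_eq] at hmin
  obtain ⟨n, _ | _, p, hnontrivial, hp⟩ := hnotfree
  · have hn : n ≠ 0 := by simpa using hnontrivial
    exact absurd hp (zpow_apply_ne_self_of_dihedral_minimal hσ hrel hmin hn p)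
  · exact dense_zpowOrbit_of_dihedral_minimal hσ hrel hmin hp

theorem stmt_18 {X : Type*} [TopologicalSpace X] [CompactSpace X] [T2Space X]
    [TopologicalSpace.MetrizableSpace X] [TotallyDisconnectedSpace X] [PerfectSpace X]
    (φ σ : X ≃ₜ X) (hσ : ∀ x, σ (σ x) = x) (hrel : ∀ x, σ (φ (σ x)) = φ.symm x)
    (hmin : ∀ x : X,
      Dense {y : X | ∃ (n : ℤ) (i : Bool), (φ.toEquiv ^ n) (if i then σ x else x) = y})
    (hnotfree : ∃ (n : ℤ) (i : Bool) (x : X),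
      ¬(n = 0 ∧ i = false) ∧ (φ.toEquiv ^ n) (if i then σ x else x) = x) :
    ∀ x : X, Dense {y : X | ∃ n : ℤ, (φ.toEquiv ^ n) x = y} :=
  stmt_18_general φ σ hσ hrel hmin hnotfree
end

section
/- Let a, b be involutive homeomorphisms of a compact totally disconnected Hausdorff space X such that b∘a is minimal and the action of the group generated by a and b is not free. Suppose (Aₙ)ₙ and (Bₙ)ₙ are families of disjoint clopen sets, only finitely many nonempty, and Σₙ n(1_{Aₙ} - 1_{a(Aₙ)}) = Σₙ n(1_{b(Bₙ)} - 1_{Bₙ}) as functions X → ℤ. Then both sides are identically zero; in particular Σₙ n·1_{a(Aₙ)} = Σₙ n·1_{Aₙ}. -/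
theorem stmt_19 {X : Type*} [TopologicalSpace X] [CompactSpace X] [T2Space X]
    [TotallyDisconnectedSpace X]
    (a b : X ≃ₜ X) (ha : ∀ x, a (a x) = x) (hb : ∀ x, b (b x) = x)
    (hmin : ∀ x : X, Dense {y : X | ∃ n : ℤ, ((a.toEquiv.trans b.toEquiv) ^ n) x = y})
    (hnotfree : (∃ x, a x = x) ∨ (∃ x, b x = x))
    (s : Finset ℤ) (A B : ℤ → Set X)
    (hAclopen : ∀ n, IsClopen (A n)) (hBclopen : ∀ n, IsClopen (B n))
    (hAdisj : Pairwise (Function.onFun Disjoint A))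
    (hBdisj : Pairwise (Function.onFun Disjoint B))
    (heq : ∀ x : X,
      ∑ n ∈ s, ((A n).indicator (fun _ => n) x - (⇑a '' A n).indicator (fun _ => n) x)
        = ∑ n ∈ s,
            ((⇑b '' B n).indicator (fun _ => n) x - (B n).indicator (fun _ => n) x)) :
    (∀ x : X,
      ∑ n ∈ s, ((A n).indicator (fun _ => n) x - (⇑a '' A n).indicator (fun _ => n) x)
        = 0) ∧
    (∀ x : X,
      ∑ n ∈ s, ((B n).indicator (fun _ => n) x - (⇑b '' B n).indicator (fun _ => n) x)
        = 0) ∧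
    ∀ x : X, ∑ n ∈ s, (⇑a '' A n).indicator (fun _ => n) x
        = ∑ n ∈ s, (A n).indicator (fun _ => n) x := by
  -- membership in image of an involutive equiv
  have mem_img : ∀ (e : X ≃ₜ X), (∀ x, e (e x) = x) → ∀ (C : Set X) (x : X),
      x ∈ ⇑e '' C ↔ e x ∈ C := by
    intro e he C x
    constructor
    · rintro ⟨c, hc, rfl⟩; rwa [he]
    · intro h; exact ⟨e x, h, he x⟩
  have ind_img : ∀ (e : X ≃ₜ X), (∀ x, e (e x) = x) → ∀ (C : Set X) (n : ℤ) (x : X),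
      (⇑e '' C).indicator (fun _ => n) x = C.indicator (fun _ => n) (e x) := by
    intro e he C n x
    by_cases hx : e x ∈ C
    · rw [Set.indicator_of_mem ((mem_img e he C x).mpr hx), Set.indicator_of_mem hx]
    · rw [Set.indicator_of_notMem (fun h' => hx ((mem_img e he C x).mp h')),
        Set.indicator_of_notMem hx]
  set h : X → ℤ := fun x =>
    ∑ n ∈ s, ((A n).indicator (fun _ => n) x - (⇑a '' A n).indicator (fun _ => n) x) with hh
  have hha : ∀ x, h (a x) = -h x := by
    intro x
    simp only [hh, ← Finset.sum_neg_distrib, neg_sub]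
    refine Finset.sum_congr rfl fun n _ => ?_
    rw [ind_img a ha, ind_img a ha, ha]
  have hhb : ∀ x, h (b x) = -h x := by
    intro x
    rw [hh]
    simp only [heq]
    simp only [← Finset.sum_neg_distrib, neg_sub]
    refine Finset.sum_congr rfl fun n _ => ?_
    rw [ind_img b hb, ind_img b hb, hb]
  set T : Equiv.Perm X := a.toEquiv.trans b.toEquiv with hT
  have hhT : ∀ x, h (T x) = h x := by
    intro x
    show h (b (a x)) = h x
    rw [hhb, hha, neg_neg]
  have hhTinv : ∀ x, h (T⁻¹ x) = h x := by
    intro x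
    conv_rhs => rw [show x = T (T⁻¹ x) from (Equiv.apply_symm_apply T x).symm]
    rw [hhT]
  have hhTz : ∀ (n : ℤ) (x : X), h ((T ^ n) x) = h x := by
    intro n
    induction n using Int.induction_on with
    | zero => intro x; simp
    | succ k ih =>
        intro x
        have : (T ^ ((k : ℤ) + 1)) x = (T ^ (k : ℤ)) (T x) := by
          rw [zpow_add_one]; rfl
        rw [this, ih, hhT]
    | pred k ih =>
        intro x
        have : (T ^ (-(k : ℤ) - 1)) x = (T ^ (-(k : ℤ))) (T⁻¹ x) := by
          rw [zpow_sub_one]; rfl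
        rw [this, ih, hhTinv]
  -- h is continuous (ℤ discrete)
  have hcont : Continuous h := by
    apply continuous_finset_sum
    intro n _
    apply Continuous.sub
    · exact continuous_indicator (by simp [(hAclopen n).frontier_eq]) continuous_const.continuousOn
    · have hcl : IsClopen (⇑a '' A n) := by
        rw [show ⇑a '' A n = ⇑(a.symm) ⁻¹' A n from (Equiv.image_eq_preimage_symm _ _)]
        exact (hAclopen n).preimage a.symm.continuous
      exact continuous_indicator (by simp [hcl.frontier_eq]) continuous_const.continuousOn
  -- fixed point gives h x0 = 0
  obtain ⟨x0, hx0⟩ : ∃ x0, h x0 = 0 := by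
    rcases hnotfree with ⟨x, hx⟩ | ⟨x, hx⟩
    · refine ⟨x, ?_⟩
      have := hha x
      rw [hx] at this
      linarith
    · refine ⟨x, ?_⟩
      have := hhb x
      rw [hx] at this
      linarith
  have hzero : ∀ x, h x = 0 := by
    have hclosed : IsClosed {x : X | h x = 0} := isClosed_eq hcont continuous_const
    have hsub : {y : X | ∃ n : ℤ, ((a.toEquiv.trans b.toEquiv) ^ n) x0 = y} ⊆ {x : X | h x = 0} := by
      rintro y ⟨n, rfl⟩
      show h ((T ^ n) x0) = 0
      rw [hhTz, hx0]
    have : closure {y : X | ∃ n : ℤ, ((a.toEquiv.trans b.toEquiv) ^ n) x0 = y} ⊆ {x | h x = 0} :=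
      hclosed.closure_subset_iff.mpr hsub
    intro x
    exact this ((hmin x0).closure_eq ▸ Set.mem_univ x : x ∈ closure _)
  refine ⟨hzero, ?_, ?_⟩
  · intro x
    have h0 : (∑ n ∈ s, ((⇑b '' B n).indicator (fun _ => n) x
        - (B n).indicator (fun _ => n) x)) = 0 := by
      rw [← heq x]; exact hzero x
    rw [← neg_eq_zero, ← Finset.sum_neg_distrib]
    simp only [neg_sub]
    exact h0
  · intro x
    have h0 : (∑ n ∈ s, ((A n).indicator (fun _ => n) x
        - (⇑a '' A n).indicator (fun _ => n) x)) = 0 := hzero x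
    rw [Finset.sum_sub_distrib, sub_eq_zero] at h0
    exact h0.symm
end
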